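/- arXiv:2305.06714 — 2 statements merged into one kernel-verified Lean document; each statement's English description precedes it below -/
import Mathlib

section
/- Every factorization double category X is flat: any square in X is uniquely determined by its boundary (its four edges). -/
open CategoryTheory

universe u

namespace Paper

/-- A (strict) double category, presented elementarily: objects, vertical morphisms,
horizontal morphisms and squares, with vertical and horizontal compositions of squares. -/
structure DblCat : Type (u + 1) where
  Obj : Type u
  Ver : Obj → Obj → Type u
  Hor : Obj → Obj → Type u
  vId : ∀ a, Ver a a
  vComp : ∀ {a b c}, Ver a b → Ver b c → Ver a c
  hId : ∀ a, Hor a a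
  hComp : ∀ {a b c}, Hor a b → Hor b c → Hor a c
  vId_comp : ∀ {a b} (f : Ver a b), vComp (vId a) f = f
  vComp_id : ∀ {a b} (f : Ver a b), vComp f (vId b) = f
  vAssoc : ∀ {a b c d} (f : Ver a b) (g : Ver b c) (h : Ver c d),
    vComp (vComp f g) h = vComp f (vComp g h)
  hId_comp : ∀ {a b} (f : Hor a b), hComp (hId a) f = f
  hComp_id : ∀ {a b} (f : Hor a b), hComp f (hId b) = f
  hAssoc : ∀ {a b c d} (f : Hor a b) (g : Hor b c) (h : Hor c d),
    hComp (hComp f g) h = hComp f (hComp g h)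
  /-- squares, indexed by top, left, right, bottom boundary -/
  Sq : ∀ {a b c d}, Hor a b → Ver a c → Ver b d → Hor c d → Type u
  vSq : ∀ {a b c d e f : Obj} {t : Hor a b} {l : Ver a c} {r : Ver b d} {m : Hor c d}
    {l' : Ver c e} {r' : Ver d f} {bo : Hor e f},
    Sq t l r m → Sq m l' r' bo → Sq t (vComp l l') (vComp r r') bo
  hSq : ∀ {a b c a' b' c' : Obj} {t1 : Hor a b} {t2 : Hor b c} {l : Ver a a'} {m : Ver b b'}
    {r : Ver c c'} {b1 : Hor a' b'} {b2 : Hor b' c'},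
    Sq t1 l m b1 → Sq t2 m r b2 → Sq (hComp t1 t2) l r (hComp b1 b2)
  vIdSq : ∀ {a b} (g : Hor a b), Sq g (vId a) (vId b) g
  hIdSq : ∀ {a b} (u : Ver a b), Sq (hId a) u u (hId b)
  vSq_id_comp : ∀ {a b c d} {t : Hor a b} {l : Ver a c} {r : Ver b d} {bo : Hor c d}
    (α : Sq t l r bo), HEq (vSq (vIdSq t) α) α
  vSq_comp_id : ∀ {a b c d} {t : Hor a b} {l : Ver a c} {r : Ver b d} {bo : Hor c d}
    (α : Sq t l r bo), HEq (vSq α (vIdSq bo)) α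
  vSq_assoc : ∀ {a b c d e f g h : Obj} {t : Hor a b} {l : Ver a c} {r : Ver b d}
    {m1 : Hor c d} {l' : Ver c e} {r' : Ver d f} {m2 : Hor e f}
    {l'' : Ver e g} {r'' : Ver f h} {bo : Hor g h}
    (α : Sq t l r m1) (β : Sq m1 l' r' m2) (γ : Sq m2 l'' r'' bo),
    HEq (vSq (vSq α β) γ) (vSq α (vSq β γ))
  hSq_id_comp : ∀ {a b c d} {t : Hor a b} {l : Ver a c} {r : Ver b d} {bo : Hor c d}
    (α : Sq t l r bo), HEq (hSq (hIdSq l) α) α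
  hSq_comp_id : ∀ {a b c d} {t : Hor a b} {l : Ver a c} {r : Ver b d} {bo : Hor c d}
    (α : Sq t l r bo), HEq (hSq α (hIdSq r)) α
  hSq_assoc : ∀ {a b c d a' b' c' d' : Obj} {t1 : Hor a b} {t2 : Hor b c} {t3 : Hor c d}
    {l : Ver a a'} {m1 : Ver b b'} {m2 : Ver c c'} {r : Ver d d'}
    {b1 : Hor a' b'} {b2 : Hor b' c'} {b3 : Hor c' d'}
    (α : Sq t1 l m1 b1) (β : Sq t2 m1 m2 b2) (γ : Sq t3 m2 r b3),
    HEq (hSq (hSq α β) γ) (hSq α (hSq β γ))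
  interchange : ∀ {a b c a' b' c' a'' b'' c'' : Obj}
    {t1 : Hor a b} {t2 : Hor b c} {l : Ver a a'} {m : Ver b b'} {r : Ver c c'}
    {b1 : Hor a' b'} {b2 : Hor b' c'}
    {l' : Ver a' a''} {m' : Ver b' b''} {r' : Ver c' c''}
    {c1 : Hor a'' b''} {c2 : Hor b'' c''}
    (α : Sq t1 l m b1) (γ : Sq t2 m r b2) (β : Sq b1 l' m' c1) (δ : Sq b2 m' r' c2),
    hSq (vSq α β) (vSq γ δ) = vSq (hSq α γ) (hSq β δ)
  vIdSq_hId : ∀ a, vIdSq (hId a) = hIdSq (vId a)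
  vIdSq_hComp : ∀ {a b c} (g : Hor a b) (h : Hor b c),
    vIdSq (hComp g h) = hSq (vIdSq g) (vIdSq h)
  hIdSq_vComp : ∀ {a b c} (u : Ver a b) (v : Ver b c),
    hIdSq (vComp u v) = vSq (hIdSq u) (hIdSq v)

namespace DblCat

variable (X : DblCat.{u})

/-- A square `κ` (with top `g`, left `l`, right `u`, bottom `bo`) is opcartesian
(with respect to the codomain functor `d₀ : X₁ → X₀`). -/
def Opcart {a b bh c : X.Obj} {g : X.Hor a b} {l : X.Ver a bh} {u : X.Ver b c}
    {bo : X.Hor bh c} (κ : X.Sq g l u bo) : Prop :=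
  ∀ {d e : X.Obj} (w : X.Ver a d) (v : X.Ver c e) (h : X.Hor d e)
    (α : X.Sq g w (X.vComp u v) h),
    ∃! p : Σ' θ : X.Ver bh d, X.Sq bo θ v h,
      X.vComp l p.1 = w ∧ HEq (X.vSq κ p.2) α

/-- A crossed double category: every top-right corner has an opcartesian filler,
horizontal identity squares are opcartesian, and opcartesian squares are closed under
horizontal composition. -/
def Crossed : Prop :=
  (∀ {a b c : X.Obj} (g : X.Hor a b) (u : X.Ver b c),
      ∃ (bh : X.Obj) (l : X.Ver a bh) (bo : X.Hor bh c) (κ : X.Sq g l u bo), X.Opcart κ) ∧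
  (∀ {a b : X.Obj} (u : X.Ver a b), X.Opcart (X.hIdSq u)) ∧
  (∀ {a b c a' b' c' : X.Obj} {t1 : X.Hor a b} {t2 : X.Hor b c} {l : X.Ver a a'}
      {m : X.Ver b b'} {r : X.Ver c c'} {b1 : X.Hor a' b'} {b2 : X.Hor b' c'}
      (κ1 : X.Sq t1 l m b1) (κ2 : X.Sq t2 m r b2),
      X.Opcart κ1 → X.Opcart κ2 → X.Opcart (X.hSq κ1 κ2))

/-- Opcartesian in `X* = ((Xᵛ)ʰ)ᵀ`, expressed elementarily in `X`. -/
def Opcart2 {a b bh c : X.Obj} {g : X.Hor a b} {l : X.Ver a bh} {u : X.Ver b c}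
    {bo : X.Hor bh c} (κ : X.Sq g l u bo) : Prop :=
  ∀ {e : X.Obj} (w : X.Ver a e) (k : X.Hor e c) (α : X.Sq g w u k),
    ∃! p : Σ' ψ : X.Hor e bh, X.Sq (X.hId a) w l ψ,
      HEq (X.hSq p.2 κ) α

/-- Bicartesian squares: opcartesian in both `X` and `X*`. -/
def Bicart {a b bh c : X.Obj} {g : X.Hor a b} {l : X.Ver a bh} {u : X.Ver b c}
    {bo : X.Hor bh c} (κ : X.Sq g l u bo) : Prop :=
  X.Opcart κ ∧ X.Opcart2 κ

/-- Top-right bicrossed double category. -/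
def TopRightBicrossed : Prop :=
  (∀ {a b c : X.Obj} (g : X.Hor a b) (u : X.Ver b c),
      ∃ (bh : X.Obj) (l : X.Ver a bh) (bo : X.Hor bh c) (κ : X.Sq g l u bo), X.Bicart κ) ∧
  (∀ {a b : X.Obj} (u : X.Ver a b), X.Bicart (X.hIdSq u)) ∧
  (∀ {a b : X.Obj} (g : X.Hor a b), X.Bicart (X.vIdSq g)) ∧
  (∀ {a b c a' b' c' : X.Obj} {t1 : X.Hor a b} {t2 : X.Hor b c} {l : X.Ver a a'}
      {m : X.Ver b b'} {r : X.Ver c c'} {b1 : X.Hor a' b'} {b2 : X.Hor b' c'}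
      (κ1 : X.Sq t1 l m b1) (κ2 : X.Sq t2 m r b2),
      X.Bicart κ1 → X.Bicart κ2 → X.Bicart (X.hSq κ1 κ2)) ∧
  (∀ {a b c d e f : X.Obj} {t : X.Hor a b} {l : X.Ver a c} {r : X.Ver b d} {m : X.Hor c d}
      {l' : X.Ver c e} {r' : X.Ver d f} {bo : X.Hor e f}
      (κ1 : X.Sq t l r m) (κ2 : X.Sq m l' r' bo),
      X.Bicart κ1 → X.Bicart κ2 → X.Bicart (X.vSq κ1 κ2))

/-- Codomain-discrete double category: every top-right corner fills into a unique square. -/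
def CodDiscrete : Prop :=
  ∀ {a b c : X.Obj} (g : X.Hor a b) (u : X.Ver b c),
    ∃! p : Σ' (bh : X.Obj) (l : X.Ver a bh) (bo : X.Hor bh c), X.Sq g l u bo, True

/-- Every top-right corner can be filled into (at least) one square. -/
def CornerFill : Prop :=
  ∀ {a b c : X.Obj} (g : X.Hor a b) (u : X.Ver b c),
    ∃ (bh : X.Obj) (l : X.Ver a bh) (bo : X.Hor bh c), Nonempty (X.Sq g l u bo)

def AllOpcart : Prop :=
  ∀ {a b c d : X.Obj} {t : X.Hor a b} {l : X.Ver a c} {r : X.Ver b d} {bo : X.Hor c d}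
    (κ : X.Sq t l r bo), X.Opcart κ

def AllBicart : Prop :=
  ∀ {a b c d : X.Obj} {t : X.Hor a b} {l : X.Ver a c} {r : X.Ver b d} {bo : X.Hor c d}
    (κ : X.Sq t l r bo), X.Bicart κ

def HIso {a b : X.Obj} (g : X.Hor a b) : Prop :=
  ∃ g' : X.Hor b a, X.hComp g g' = X.hId a ∧ X.hComp g' g = X.hId b

def VIso {a b : X.Obj} (u : X.Ver a b) : Prop :=
  ∃ u' : X.Ver b a, X.vComp u u' = X.vId a ∧ X.vComp u' u = X.vId b

/-- Strict horizontal invariance. -/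
def HorInvariant : Prop :=
  ∀ {a b c d : X.Obj} (g : X.Hor a b) (h : X.Hor c d) (u : X.Ver b d),
    X.HIso g → X.HIso h → ∃! _p : Σ' w : X.Ver a c, X.Sq g w u h, True

/-- Strict vertical invariance. -/
def VerInvariant : Prop :=
  ∀ {a b c d : X.Obj} (g : X.Hor a b) (u : X.Ver a c) (v : X.Ver b d),
    X.VIso u → X.VIso v → ∃! _p : Σ' h : X.Hor c d, X.Sq g u v h, True

def Invariant : Prop := X.HorInvariant ∧ X.VerInvariant

/-- The top-left corner `(π₁, π₂)` of the vertical dual `Xᵛ`, expressed in `X`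
(`π₁ : a → a'` vertical in `X`, `π₂ : a' → b` horizontal), is jointly monic. -/
def JMonicVDual {a a' b : X.Obj} (π₁ : X.Ver a a') (π₂ : X.Hor a' b) : Prop :=
  ∀ {a'' : X.Obj} (θ θ' : X.Ver a' a'') (ψ ψ' : X.Hor a'' a')
    (_κ1 : X.Sq (X.hId a') θ (X.vId a') ψ) (_κ2 : X.Sq (X.hId a') θ' (X.vId a') ψ'),
    X.vComp π₁ θ = X.vComp π₁ θ' → X.hComp ψ π₂ = X.hComp ψ' π₂ → θ = θ' ∧ ψ = ψ'

/-- Factorization double category. -/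
def IsFactDbl : Prop :=
  X.Invariant ∧ X.CornerFill ∧ X.AllBicart ∧
  (∀ {a a' b : X.Obj} (π₁ : X.Ver a a') (π₂ : X.Hor a' b), X.JMonicVDual π₁ π₂)

/-- A corner from `a` to `b`: a vertical morphism followed by a horizontal one. -/
structure Corner (a b : X.Obj) : Type u where
  mid : X.Obj
  v : X.Ver a mid
  h : X.Hor mid b

/-- A 2-cell between corners. -/
def CellRel {a b : X.Obj} (c1 c2 : X.Corner a b) : Prop :=
  ∃ (θ : X.Ver c1.mid c2.mid) (_β : X.Sq c1.h θ (X.vId b) c2.h), X.vComp c1.v θ = c2.v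

/-- Morphisms of the category of corners: corners modulo zigzags of 2-cells. -/
def CnrHom (a b : X.Obj) : Type u := Quot (fun c1 c2 : X.Corner a b => X.CellRel c1 c2)

def mkCnr {a b : X.Obj} (c : X.Corner a b) : X.CnrHom a b := Quot.mk _ c

/-- The vertical corner `[u, 1]`. -/
def mkE {a b : X.Obj} (u : X.Ver a b) : X.CnrHom a b := X.mkCnr ⟨b, u, X.hId b⟩

/-- The horizontal corner `[1, g]`. -/
def mkM {a b : X.Obj} (g : X.Hor a b) : X.CnrHom a b := X.mkCnr ⟨a, X.vId a, g⟩

/-- The identity corner `[1ₐ, 1ₐ]`. -/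
def cnrId (a : X.Obj) : X.CnrHom a a := X.mkCnr ⟨a, X.vId a, X.hId a⟩

/-- A composition operation on corners which is computed by filling the middle
corner with (any) opcartesian square. -/
structure CnrStruct (X : DblCat.{u}) where
  comp : ∀ {a b c : X.Obj}, X.CnrHom a b → X.CnrHom b c → X.CnrHom a c
  compat : ∀ {a m1 b m2 c bh : X.Obj} (u : X.Ver a m1) (g : X.Hor m1 b)
    (v : X.Ver b m2) (h : X.Hor m2 c)
    (w : X.Ver m1 bh) (bo : X.Hor bh m2) (κ : X.Sq g w v bo), X.Opcart κ →
    comp (X.mkCnr ⟨m1, u, g⟩) (X.mkCnr ⟨m2, v, h⟩) =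
      X.mkCnr ⟨bh, X.vComp u w, X.hComp bo h⟩

/-- The category of corners: a corner composition which is unital and associative. -/
structure CnrCat (X : DblCat.{u}) extends CnrStruct X where
  id_comp : ∀ {a b : X.Obj} (f : X.CnrHom a b), comp (X.cnrId a) f = f
  comp_id : ∀ {a b : X.Obj} (f : X.CnrHom a b), comp f (X.cnrId b) = f
  assoc : ∀ {a b c d : X.Obj} (f : X.CnrHom a b) (g : X.CnrHom b c) (h : X.CnrHom c d),
    comp (comp f g) h = comp f (comp g h)

/-- The class `E_X` of vertical corners. -/
def InE {a b : X.Obj} (f : X.CnrHom a b) : Prop := ∃ u : X.Ver a b, f = X.mkE u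

/-- The class `M_X` of horizontal corners. -/
def InM {a b : X.Obj} (f : X.CnrHom a b) : Prop := ∃ g : X.Hor a b, f = X.mkM g

/-- Isomorphisms in the category of corners. -/
def CnrIso (c : CnrStruct X) {a b : X.Obj} (f : X.CnrHom a b) : Prop :=
  ∃ g : X.CnrHom b a, c.comp f g = X.cnrId a ∧ c.comp g f = X.cnrId b

end DblCat

end Paper

namespace Paper

namespace DblCat

variable (X : DblCat.{u})

/-- Recast a square along equalities of its boundary arrows. -/
def recast {a b c d : X.Obj} {t t' : X.Hor a b} {l l' : X.Ver a c}
    {r r' : X.Ver b d} {m m' : X.Hor c d} (ht : t = t') (hl : l = l') (hr : r = r')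
    (hm : m = m') (s : X.Sq t l r m) : X.Sq t' l' r' m' := by
  subst ht hl hr hm; exact s

theorem recast_heq {a b c d : X.Obj} {t t' : X.Hor a b} {l l' : X.Ver a c}
    {r r' : X.Ver b d} {m m' : X.Hor c d} (ht : t = t') (hl : l = l') (hr : r = r')
    (hm : m = m') (s : X.Sq t l r m) : HEq (X.recast ht hl hr hm s) s := by
  subst ht hl hr hm; rfl

theorem vSq_congr {a b c d e f : X.Obj} {t t' : X.Hor a b} {l l' : X.Ver a c}
    {r r' : X.Ver b d} {m m' : X.Hor c d} {l2 l2' : X.Ver c e} {r2 r2' : X.Ver d f}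
    {bo bo' : X.Hor e f} {s : X.Sq t l r m} {s' : X.Sq t' l' r' m'}
    {u : X.Sq m l2 r2 bo} {u' : X.Sq m' l2' r2' bo'}
    (ht : t = t') (hl : l = l') (hr : r = r') (hm : m = m') (hl2 : l2 = l2')
    (hr2 : r2 = r2') (hbo : bo = bo') (hs : HEq s s') (hu : HEq u u') :
    HEq (X.vSq s u) (X.vSq s' u') := by
  subst ht hl hr hm hl2 hr2 hbo
  cases eq_of_heq hs; cases eq_of_heq hu; rfl

end DblCat

open DblCat in
/-- Every factorization double category is flat: any square is
uniquely determined by its boundary. -/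
theorem statement13 (X : DblCat.{u}) (hX : X.IsFactDbl)
    {a b c d : X.Obj} {t : X.Hor a b} {l : X.Ver a c} {r : X.Ver b d} {bo : X.Hor c d}
    (α β : X.Sq t l r bo) : α = β := by
  obtain ⟨⟨hHInv, hVInv⟩, hFill, hBi, hMono⟩ := hX
  -- identity vertical morphisms are isos
  have visoId : ∀ x : X.Obj, X.VIso (X.vId x) := fun x =>
    ⟨X.vId x, X.vId_comp _, X.vId_comp _⟩
  -- recast the right edge
  have hrid : X.vComp r (X.vId d) = r := X.vComp_id r
  set α₂ : X.Sq t l (X.vComp r (X.vId d)) bo := X.recast rfl rfl hrid.symm rfl α with hα₂def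
  set β₂ : X.Sq t l (X.vComp r (X.vId d)) bo := X.recast rfl rfl hrid.symm rfl β with hβ₂def
  have hα₂ : HEq α₂ α := X.recast_heq _ _ _ _ α
  have hβ₂ : HEq β₂ β := X.recast_heq _ _ _ _ β
  -- comparison cells from opcartesianness of α and β
  obtain ⟨⟨θ, φ⟩, ⟨hθ, hφ⟩, -⟩ := (hBi α).1 l (X.vId d) bo β₂
  obtain ⟨⟨θ', φ'⟩, ⟨hθ', hφ'⟩, -⟩ := (hBi β).1 l (X.vId d) bo α₂
  -- θ and θ' are mutually inverse, via uniqueness in opcartesianness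
  have hAssocL : X.vComp l (X.vComp θ θ') = l := by
    rw [← X.vAssoc, hθ, hθ']
  have hAssocL' : X.vComp l (X.vComp θ' θ) = l := by
    rw [← X.vAssoc, hθ', hθ]
  have hvIdd : X.vComp (X.vId d) (X.vId d) = X.vId d := X.vId_comp _
  -- candidate composite cell θθ'
  have hcomp1 : X.vComp θ θ' = X.vId c := by
    obtain ⟨q, hq, huniq⟩ := (hBi α).1 l (X.vId d) bo α₂
    have hA : X.vComp l (X.vId c) = l ∧
        HEq (X.vSq α (X.vIdSq bo)) α₂ :=
      ⟨X.vComp_id l, (X.vSq_comp_id α).trans hα₂.symm⟩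
    have hB : X.vComp l (X.vComp θ θ') = l ∧
        HEq (X.vSq α (X.recast rfl rfl hvIdd rfl (X.vSq φ φ'))) α₂ := by
      refine ⟨hAssocL, ?_⟩
      have e1 : HEq (X.vSq α (X.recast rfl rfl hvIdd rfl (X.vSq φ φ')))
          (X.vSq α (X.vSq φ φ')) :=
        X.vSq_congr rfl rfl rfl rfl rfl hvIdd.symm rfl HEq.rfl (X.recast_heq _ _ _ _ _)
      have e2 : HEq (X.vSq α (X.vSq φ φ')) (X.vSq (X.vSq α φ) φ') :=
        (X.vSq_assoc α φ φ').symm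
      have e3 : HEq (X.vSq (X.vSq α φ) φ') (X.vSq β φ') :=
        X.vSq_congr rfl hθ hrid rfl rfl rfl rfl (hφ.trans hβ₂) HEq.rfl
      exact ((e1.trans e2).trans e3).trans hφ'
    have := (huniq ⟨X.vId c, X.vIdSq bo⟩ hA).trans (huniq ⟨X.vComp θ θ',
      X.recast rfl rfl hvIdd rfl (X.vSq φ φ')⟩ hB).symm
    exact (congrArg PSigma.fst this).symm
  have hcomp2 : X.vComp θ' θ = X.vId c := by
    obtain ⟨q, hq, huniq⟩ := (hBi β).1 l (X.vId d) bo β₂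
    have hA : X.vComp l (X.vId c) = l ∧
        HEq (X.vSq β (X.vIdSq bo)) β₂ :=
      ⟨X.vComp_id l, (X.vSq_comp_id β).trans hβ₂.symm⟩
    have hB : X.vComp l (X.vComp θ' θ) = l ∧
        HEq (X.vSq β (X.recast rfl rfl hvIdd rfl (X.vSq φ' φ))) β₂ := by
      refine ⟨hAssocL', ?_⟩
      have e1 : HEq (X.vSq β (X.recast rfl rfl hvIdd rfl (X.vSq φ' φ)))
          (X.vSq β (X.vSq φ' φ)) :=
        X.vSq_congr rfl rfl rfl rfl rfl hvIdd.symm rfl HEq.rfl (X.recast_heq _ _ _ _ _)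
      have e2 : HEq (X.vSq β (X.vSq φ' φ)) (X.vSq (X.vSq β φ') φ) :=
        (X.vSq_assoc β φ' φ).symm
      have e3 : HEq (X.vSq (X.vSq β φ') φ) (X.vSq α φ) :=
        X.vSq_congr rfl hθ' hrid rfl rfl rfl rfl (hφ'.trans hα₂) HEq.rfl
      exact ((e1.trans e2).trans e3).trans hφ
    have := (huniq ⟨X.vId c, X.vIdSq bo⟩ hA).trans (huniq ⟨X.vComp θ' θ,
      X.recast rfl rfl hvIdd rfl (X.vSq φ' φ)⟩ hB).symm
    exact (congrArg PSigma.fst this).symm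
  have hθiso : X.VIso θ := ⟨θ', hcomp1, hcomp2⟩
  -- factor φ through the identity square on bo, in the transposed direction
  obtain ⟨⟨ψ₀, δ⟩, hδ, -⟩ := (hBi (X.vIdSq bo)).2 θ bo φ
  -- the bottom of the factorization composes to bo, by vertical invariance
  have hψ₀bo : X.hComp ψ₀ bo = bo := by
    obtain ⟨q, -, huniq⟩ := hVInv bo θ (X.vId d) hθiso (visoId d)
    have e := (huniq ⟨X.hComp ψ₀ bo,
        X.recast (X.hId_comp bo) rfl rfl rfl (X.hSq δ (X.vIdSq bo))⟩ trivial).trans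
      (huniq ⟨bo, φ⟩ trivial).symm
    exact congrArg PSigma.fst e
  -- joint monicity of the corner (l, bo) in the vertical dual
  have hmain := hMono l bo θ (X.vId c) ψ₀ (X.hId c) δ (X.hIdSq (X.vId c))
    (hθ.trans (X.vComp_id l).symm) (hψ₀bo.trans (X.hId_comp bo).symm)
  have hθid : θ = X.vId c := hmain.1
  -- hence φ is the identity square on bo, by vertical invariance
  have hφIbo : HEq φ (X.vIdSq bo) := by
    obtain ⟨q, -, huniq⟩ := hVInv bo (X.vId c) (X.vId d) (visoId c) (visoId d)
    have e := (huniq ⟨bo, X.recast rfl hθid rfl rfl φ⟩ trivial).trans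
      (huniq ⟨bo, X.vIdSq bo⟩ trivial).symm
    injection e with e1 e2
    exact ((X.recast_heq rfl hθid rfl rfl φ).symm).trans (heq_of_eq e2)
  -- conclude
  have hfin1 : HEq (X.vSq α φ) β := hφ.trans hβ₂
  have hfin2 : HEq (X.vSq α φ) (X.vSq α (X.vIdSq bo)) :=
    X.vSq_congr rfl rfl rfl rfl hθid rfl rfl HEq.rfl hφIbo
  have hfin3 : HEq (X.vSq α (X.vIdSq bo)) α := X.vSq_comp_id α
  exact eq_of_heq ((hfin3.symm.trans hfin2.symm).trans hfin1)

end Paper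
end

section
/- Let X be a factorization double category. Then the classes (E_X, M_X) of vertical and horizontal corners form an orthogonal factorization system on the category of corners Cnr(X): E_X and M_X are wide subcategories, every morphism factors as an E_X morphism followed by an M_X morphism uniquely up to a unique comparison morphism, and E_X ∩ M_X equals the class of isomorphisms of Cnr(X). -/
open CategoryTheory

universe u

namespace Paper

namespace DblCat

variable {X : DblCat.{u}}

/-- Recast a square along boundary equalities. -/
def rc {a b c d : X.Obj} {t t' : X.Hor a b} {l l' : X.Ver a c} {r r' : X.Ver b d}
    {bo bo' : X.Hor c d} (ht : t = t') (hl : l = l') (hr : r = r') (hb : bo = bo')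
    (s : X.Sq t l r bo) : X.Sq t' l' r' bo' := by
  subst ht hl hr hb; exact s

theorem rc_heq {a b c d : X.Obj} {t t' : X.Hor a b} {l l' : X.Ver a c} {r r' : X.Ver b d}
    {bo bo' : X.Hor c d} (ht : t = t') (hl : l = l') (hr : r = r') (hb : bo = bo')
    (s : X.Sq t l r bo) : HEq (rc ht hl hr hb s) s := by
  subst ht hl hr hb; rfl

theorem vSq_heq_right {a b c d e f : X.Obj} {t : X.Hor a b} {l0 : X.Ver a c} {r0 : X.Ver b d}
    {m1 : X.Hor c d} {l l' : X.Ver c e} {r r' : X.Ver d f} {bo bo' : X.Hor e f}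
    (B : X.Sq t l0 r0 m1) (hl : l = l') (hr : r = r') (hb : bo = bo')
    {s : X.Sq m1 l r bo} {s' : X.Sq m1 l' r' bo'} (hs : HEq s s') :
    HEq (X.vSq B s) (X.vSq B s') := by
  subst hl hr hb; rw [eq_of_heq hs]

theorem vSq_heq_left {a b c d e f : X.Obj} {t : X.Hor a b} {l l' : X.Ver a c} {r r' : X.Ver b d}
    {m1 : X.Hor c d} {l2 : X.Ver c e} {r2 : X.Ver d f} {bo : X.Hor e f}
    (hl : l = l') (hr : r = r')
    {s : X.Sq t l r m1} {s' : X.Sq t l' r' m1} (hs : HEq s s') (Q : X.Sq m1 l2 r2 bo) :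
    HEq (X.vSq s Q) (X.vSq s' Q) := by
  subst hl hr; rw [eq_of_heq hs]

theorem cellRel_refl {a b : X.Obj} (c1 : X.Corner a b) : X.CellRel c1 c1 :=
  ⟨X.vId c1.mid, X.vIdSq c1.h, X.vComp_id _⟩

theorem cellRel_trans {a b : X.Obj} {c1 c2 c3 : X.Corner a b}
    (h12 : X.CellRel c1 c2) (h23 : X.CellRel c2 c3) : X.CellRel c1 c3 := by
  obtain ⟨θ1, β1, h1⟩ := h12
  obtain ⟨θ2, β2, h2⟩ := h23
  exact ⟨X.vComp θ1 θ2, rc rfl rfl (X.vId_comp (X.vId b)) rfl (X.vSq β1 β2),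
    by rw [← X.vAssoc, h1, h2]⟩

theorem cellRel_symm (hX : X.IsFactDbl) {a b : X.Obj} {c1 c2 : X.Corner a b}
    (h : X.CellRel c1 c2) : X.CellRel c2 c1 := by
  obtain ⟨θ, β, hv⟩ := h
  obtain ⟨⟨θ', S⟩, ⟨h1, -⟩, -⟩ :=
    (hX.2.2.1 β).1 (X.vId c1.mid) (X.vId b) c1.h
      (rc rfl rfl (X.vId_comp (X.vId b)).symm rfl (X.vIdSq c1.h))
  exact ⟨θ', S, by rw [← hv, X.vAssoc, h1, X.vComp_id]⟩

theorem cnr_exact (hX : X.IsFactDbl) {a b : X.Obj} {c1 c2 : X.Corner a b}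
    (h : X.mkCnr c1 = X.mkCnr c2) : X.CellRel c1 c2 := by
  let P : X.CnrHom a b → Prop :=
    Quot.lift (fun c' => X.CellRel c1 c') (fun x y hxy => propext
      ⟨fun hcx => cellRel_trans hcx hxy,
       fun hcy => cellRel_trans hcy (cellRel_symm hX hxy)⟩)
  have h1 : P (X.mkCnr c1) := cellRel_refl c1
  rw [h] at h1
  exact h1

theorem vIso_vId (a : X.Obj) : X.VIso (X.vId a) := ⟨X.vId a, X.vId_comp _, X.vId_comp _⟩

theorem hIso_hId (a : X.Obj) : X.HIso (X.hId a) := ⟨X.hId a, X.hId_comp _, X.hId_comp _⟩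

theorem bot_unique (hX : X.IsFactDbl) {a b c d : X.Obj} {g : X.Hor a b} {u : X.Ver a c}
    {v : X.Ver b d} (hu : X.VIso u) (hv : X.VIso v) {h1 h2 : X.Hor c d}
    (S1 : X.Sq g u v h1) (S2 : X.Sq g u v h2) : h1 = h2 := by
  obtain ⟨p, -, hup⟩ := hX.1.2 g u v hu hv
  have e1 := hup ⟨h1, S1⟩ trivial
  have e2 := hup ⟨h2, S2⟩ trivial
  exact congrArg PSigma.fst (e1.trans e2.symm)

theorem left_unique (hX : X.IsFactDbl) {a b c d : X.Obj} {g : X.Hor a b} {h : X.Hor c d}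
    {u : X.Ver b d} (hg : X.HIso g) (hh : X.HIso h) {w1 w2 : X.Ver a c}
    (S1 : X.Sq g w1 u h) (S2 : X.Sq g w2 u h) : w1 = w2 := by
  obtain ⟨p, -, hup⟩ := hX.1.1 g h u hg hh
  have e1 := hup ⟨w1, S1⟩ trivial
  have e2 := hup ⟨w2, S2⟩ trivial
  exact congrArg PSigma.fst (e1.trans e2.symm)

theorem sq_exists_vIso (hX : X.IsFactDbl) {a b c d : X.Obj} (g : X.Hor a b) (u : X.Ver a c)
    (v : X.Ver b d) (hu : X.VIso u) (hv : X.VIso v) :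
    ∃ h : X.Hor c d, Nonempty (X.Sq g u v h) := by
  obtain ⟨⟨h, S⟩, -, -⟩ := hX.1.2 g u v hu hv
  exact ⟨h, ⟨S⟩⟩

theorem sq_exists_hIso (hX : X.IsFactDbl) {a b c d : X.Obj} (g : X.Hor a b) (h : X.Hor c d)
    (u : X.Ver b d) (hg : X.HIso g) (hh : X.HIso h) :
    ∃ w : X.Ver a c, Nonempty (X.Sq g w u h) := by
  obtain ⟨⟨w, S⟩, -, -⟩ := hX.1.1 g h u hg hh
  exact ⟨w, ⟨S⟩⟩

theorem comp_mkE_corner (hX : X.IsFactDbl) (c : CnrCat X) {a x z y : X.Obj} (u : X.Ver a x)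
    (w : X.Ver x z) (k : X.Hor z y) :
    c.comp (X.mkE u) (X.mkCnr ⟨z, w, k⟩) = X.mkCnr ⟨z, X.vComp u w, k⟩ := by
  have h := c.compat u (X.hId x) w k w (X.hId z) (X.hIdSq w) ((hX.2.2.1 _).1)
  rw [X.hId_comp] at h
  exact h

theorem comp_corner_mkM (hX : X.IsFactDbl) (c : CnrCat X) {a z y b : X.Obj} (w : X.Ver a z)
    (k : X.Hor z y) (h : X.Hor y b) :
    c.comp (X.mkCnr ⟨z, w, k⟩) (X.mkM h) = X.mkCnr ⟨z, w, X.hComp k h⟩ := by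
  have hc := c.compat w k (X.vId y) h (X.vId z) k (X.vIdSq k) ((hX.2.2.1 _).1)
  rw [X.vComp_id] at hc
  exact hc

theorem comp_mkE_mkE (hX : X.IsFactDbl) (c : CnrCat X) {a b d : X.Obj} (u : X.Ver a b)
    (v : X.Ver b d) : c.comp (X.mkE u) (X.mkE v) = X.mkE (X.vComp u v) :=
  comp_mkE_corner hX c u v (X.hId d)

theorem comp_mkM_mkM (hX : X.IsFactDbl) (c : CnrCat X) {a b d : X.Obj} (g : X.Hor a b)
    (h : X.Hor b d) : c.comp (X.mkM g) (X.mkM h) = X.mkM (X.hComp g h) :=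
  comp_corner_mkM hX c (X.vId a) g h

theorem factor' (hX : X.IsFactDbl) (c : CnrCat X) {a x b : X.Obj} (e : X.Ver a x)
    (m : X.Hor x b) : X.mkCnr ⟨x, e, m⟩ = c.comp (X.mkE e) (X.mkM m) := by
  have h := comp_mkE_corner hX c e (X.vId x) m
  rw [X.vComp_id] at h
  exact h.symm

theorem mkE_inj (hX : X.IsFactDbl) {a b : X.Obj} {u u' : X.Ver a b}
    (h : X.mkE u = X.mkE u') : u = u' := by
  obtain ⟨θ, S, hv⟩ := cnr_exact hX h
  have hθ : θ = X.vId b := left_unique hX (hIso_hId b) (hIso_hId b) S (X.hIdSq (X.vId b))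
  rw [hθ, X.vComp_id] at hv
  exact hv

theorem mkM_inj (hX : X.IsFactDbl) {a b : X.Obj} {g g' : X.Hor a b}
    (h : X.mkM g = X.mkM g') : g = g' := by
  obtain ⟨θ, S, hv⟩ := cnr_exact hX h
  have hθ : θ = X.vId a := (X.vId_comp θ).symm.trans hv
  exact bot_unique hX (vIso_vId a) (vIso_vId b) (X.vIdSq g) (rc rfl hθ rfl rfl S)

theorem L1 (hX : X.IsFactDbl) (c : CnrCat X) {d x : X.Obj} {u : X.Ver d x} {g : X.Hor x d}
    (H : X.mkCnr ⟨x, u, g⟩ = X.cnrId d) : X.VIso u ∧ X.HIso g := by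
  obtain ⟨θa, Sa0, ha⟩ := cnr_exact hX H.symm
  have hθa : θa = u := (X.vId_comp θa).symm.trans ha
  have Sa : X.Sq (X.hId d) u (X.vId d) g := rc rfl hθa rfl rfl Sa0
  obtain ⟨θb, Sb, hb⟩ := cnr_exact hX H
  have T : X.Sq g (X.vComp θb u) (X.vId d) g :=
    rc rfl rfl (X.vId_comp (X.vId d)) rfl (X.vSq Sb Sa)
  obtain ⟨⟨ψ, D⟩, -, -⟩ := (hX.2.2.1 (X.vIdSq g)).2 (X.vComp θb u) g T
  have Ecell : X.cnrId x = X.mkCnr ⟨x, X.vComp θb u, ψ⟩ :=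
    Quot.sound ⟨X.vComp θb u, D, X.vId_comp _⟩
  have E6 : X.mkM g = X.mkCnr ⟨x, X.vComp θb u, X.hComp ψ g⟩ := by
    have h1 : X.mkM g = c.comp (X.cnrId x) (X.mkM g) := (c.id_comp _).symm
    rw [Ecell, comp_corner_mkM hX c (X.vComp θb u) ψ g] at h1
    exact h1
  obtain ⟨τ', S', hτ⟩ := cnr_exact hX E6.symm
  have hLL : X.vComp (X.vComp θb u) (X.vComp θb u) = X.vComp θb u := by
    rw [X.vAssoc θb u (X.vComp θb u), ← X.vAssoc u θb u, hb, X.vId_comp]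
  have hL1 : X.vComp θb u = X.vId x := by
    have h1 : X.vComp θb u = X.vComp (X.vComp θb u) (X.vComp (X.vComp θb u) τ') := by
      rw [hτ, X.vComp_id]
    rw [← X.vAssoc, hLL] at h1
    rw [h1]
    exact hτ
  have hVu : X.VIso u := ⟨θb, hb, hL1⟩
  obtain ⟨h0, ⟨S0⟩⟩ := sq_exists_vIso hX (X.hId d) (X.vId d) u (vIso_vId d) hVu
  have hg1 : X.hComp h0 g = X.hId d :=
    bot_unique hX (vIso_vId d) (vIso_vId d)
      (rc (X.hId_comp (X.hId d)) rfl rfl rfl (X.hSq S0 Sa)) (X.vIdSq (X.hId d))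
  have hg2 : X.hComp g h0 = X.hId x :=
    bot_unique hX hVu hVu
      (rc (X.hId_comp (X.hId d)) rfl rfl rfl (X.hSq Sa S0)) (X.hIdSq u)
  exact ⟨hVu, ⟨h0, hg2, hg1⟩⟩

theorem comp_core (hX : X.IsFactDbl) {a x y b : X.Obj} {e : X.Ver a x} {e' : X.Ver a y}
    {m : X.Hor x b} {m' : X.Hor y b} {u θb : X.Ver x y}
    (B : X.Sq m u (X.vId b) m') (β0 : X.Sq m θb (X.vId b) m')
    (Eu : X.vComp e u = e') (E0 : X.vComp e θb = e') : u = θb := by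
  obtain ⟨⟨ρ, R⟩, ⟨Eρ, HR⟩, -⟩ :=
    (hX.2.2.1 B).1 θb (X.vId b) m' (rc rfl rfl (X.vId_comp (X.vId b)).symm rfl β0)
  obtain ⟨⟨ρ', R'⟩, ⟨Eρ', HR'⟩, -⟩ :=
    (hX.2.2.1 β0).1 u (X.vId b) m' (rc rfl rfl (X.vId_comp (X.vId b)).symm rfl B)
  have hρρ' : X.vComp ρ ρ' = X.vId y := by
    obtain ⟨pc, -, hun⟩ := (hX.2.2.1 B).1 u (X.vId b) m' (rc rfl rfl (X.vId_comp (X.vId b)).symm rfl B)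
    have w1 := hun ⟨X.vId y, X.vIdSq m'⟩
      ⟨X.vComp_id u, (X.vSq_comp_id B).trans (rc_heq _ _ _ _ B).symm⟩
    have w2 := hun ⟨X.vComp ρ ρ', rc rfl rfl (X.vId_comp (X.vId b)) rfl (X.vSq R R')⟩
      ⟨by rw [← X.vAssoc, Eρ, Eρ'], by
        refine ((vSq_heq_right B rfl (X.vId_comp (X.vId b)).symm rfl
          (rc_heq rfl rfl (X.vId_comp (X.vId b)) rfl (X.vSq R R'))).trans ?_)
        refine ((X.vSq_assoc B R R').symm.trans ?_)
        refine ((vSq_heq_left Eρ (X.vId_comp (X.vId b))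
          (HR.trans (rc_heq _ _ _ _ β0)) R').trans ?_)
        exact HR'⟩
    exact congrArg PSigma.fst (w2.trans w1.symm)
  have hρ'ρ : X.vComp ρ' ρ = X.vId y := by
    obtain ⟨pc, -, hun⟩ := (hX.2.2.1 β0).1 θb (X.vId b) m' (rc rfl rfl (X.vId_comp (X.vId b)).symm rfl β0)
    have w1 := hun ⟨X.vId y, X.vIdSq m'⟩
      ⟨X.vComp_id θb, (X.vSq_comp_id β0).trans (rc_heq _ _ _ _ β0).symm⟩
    have w2 := hun ⟨X.vComp ρ' ρ, rc rfl rfl (X.vId_comp (X.vId b)) rfl (X.vSq R' R)⟩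
      ⟨by rw [← X.vAssoc, Eρ', Eρ], by
        refine ((vSq_heq_right β0 rfl (X.vId_comp (X.vId b)).symm rfl
          (rc_heq rfl rfl (X.vId_comp (X.vId b)) rfl (X.vSq R' R))).trans ?_)
        refine ((X.vSq_assoc β0 R' R).symm.trans ?_)
        refine ((vSq_heq_left Eρ' (X.vId_comp (X.vId b))
          (HR'.trans (rc_heq _ _ _ _ B)) R).trans ?_)
        exact HR⟩
    exact congrArg PSigma.fst (w2.trans w1.symm)
  have hVρ : X.VIso ρ := ⟨ρ', hρρ', hρ'ρ⟩
  obtain ⟨⟨ψ, Dψ⟩, -, -⟩ := (hX.2.2.1 (X.vIdSq m')).2 ρ m' R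
  have hψ : X.hComp ψ m' = m' :=
    bot_unique hX hVρ (vIso_vId b)
      (rc (X.hId_comp m') rfl rfl rfl (X.hSq Dψ (X.vIdSq m'))) R
  have hj := hX.2.2.2 e' m' ρ (X.vId y) ψ (X.hId y) Dψ (X.hIdSq (X.vId y))
    (by rw [X.vComp_id, ← Eu, X.vAssoc, Eρ]; exact E0.trans Eu.symm)
    (by rw [hψ, X.hId_comp])
  obtain ⟨hj1, -⟩ := hj
  have hfin : X.vComp u ρ = θb := Eρ
  rw [hj1, X.vComp_id] at hfin
  exact hfin

theorem uniq_lemma (hX : X.IsFactDbl) (c : CnrCat X) {a x y b : X.Obj} (e : X.Ver a x)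
    (m : X.Hor x b) (e' : X.Ver a y) (m' : X.Hor y b)
    (H : c.comp (X.mkE e) (X.mkM m) = c.comp (X.mkE e') (X.mkM m')) :
    ∃! θ : X.CnrHom x y,
      c.comp (X.mkE e) θ = X.mkE e' ∧ c.comp θ (X.mkM m') = X.mkM m := by
  have hfac : X.mkCnr ⟨x, e, m⟩ = X.mkCnr ⟨y, e', m'⟩ :=
    (factor' hX c e m).trans (H.trans (factor' hX c e' m').symm)
  obtain ⟨θb, β0, E0⟩ := cnr_exact hX hfac
  refine ⟨X.mkE θb, ⟨?_, ?_⟩, ?_⟩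
  · rw [comp_mkE_mkE hX c, E0]
  · have h1 := comp_corner_mkM hX c θb (X.hId y) m'
    rw [X.hId_comp] at h1
    show c.comp (X.mkCnr ⟨y, θb, X.hId y⟩) (X.mkM m') = X.mkM m
    rw [h1]
    exact (Quot.sound ⟨θb, β0, X.vId_comp θb⟩).symm
  · rintro f ⟨h1, h2⟩
    obtain ⟨⟨z, w, k⟩, rfl⟩ := Quot.exists_rep f
    have hc1 : X.mkCnr ⟨z, X.vComp e w, k⟩ = X.mkCnr ⟨y, e', X.hId y⟩ :=
      (comp_mkE_corner hX c e w k).symm.trans h1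
    obtain ⟨τ, Sτ, Eτ⟩ := cnr_exact hX hc1
    have hrep : X.mkCnr ⟨z, w, k⟩ = X.mkCnr ⟨y, X.vComp w τ, X.hId y⟩ :=
      Quot.sound ⟨τ, Sτ, rfl⟩
    have Eu : X.vComp e (X.vComp w τ) = e' := by rw [← X.vAssoc]; exact Eτ
    have hc2 : X.mkCnr ⟨y, X.vComp w τ, m'⟩ = X.mkCnr ⟨x, X.vId x, m⟩ := by
      have h3 := comp_corner_mkM hX c (X.vComp w τ) (X.hId y) m'
      rw [X.hId_comp] at h3
      rw [← h3, ← hrep]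
      exact h2
    obtain ⟨σ, B0, hσ⟩ := cnr_exact hX hc2.symm
    have hσu : σ = X.vComp w τ := (X.vId_comp σ).symm.trans hσ
    have B : X.Sq m (X.vComp w τ) (X.vId b) m' := rc rfl hσu rfl rfl B0
    have hfin := comp_core hX B β0 Eu E0
    show X.mkCnr ⟨z, w, k⟩ = X.mkE θb
    rw [hrep, hfin]
    rfl

theorem EM_to_iso (hX : X.IsFactDbl) (c : CnrCat X) {a b : X.Obj} {u : X.Ver a b}
    (hM : X.InM (X.mkE u)) : X.CnrIso c.toCnrStruct (X.mkE u) := by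
  obtain ⟨g, hg⟩ := hM
  obtain ⟨θ, S0, hθv⟩ := cnr_exact hX hg.symm
  have hθu : θ = u := (X.vId_comp θ).symm.trans hθv
  have S : X.Sq g u (X.vId b) (X.hId b) := rc rfl hθu rfl rfl S0
  obtain ⟨θ', S', hθ'⟩ := cnr_exact hX hg
  have hθ'2 : X.vComp u θ' = X.vId a := hθ'
  have S'2 : X.Sq (X.hId b) θ' (X.vId b) g := S'
  refine ⟨X.mkE θ', ?_, ?_⟩
  · rw [comp_mkE_mkE hX c, hθ'2]
    rfl
  · rw [comp_mkE_mkE hX c]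
    exact (Quot.sound ⟨X.vComp θ' u,
      rc rfl rfl (X.vId_comp (X.vId b)) rfl (X.vSq S'2 S), X.vId_comp _⟩).symm

theorem iso_to_EM (hX : X.IsFactDbl) (c : CnrCat X) {a b c0 : X.Obj} (v : X.Ver a c0)
    (h : X.Hor c0 b) (hiso : X.CnrIso c.toCnrStruct (X.mkCnr ⟨c0, v, h⟩)) :
    X.InE (X.mkCnr ⟨c0, v, h⟩) ∧ X.InM (X.mkCnr ⟨c0, v, h⟩) := by
  obtain ⟨fb, hfb1, hfb2⟩ := hiso
  have hf : X.mkCnr ⟨c0, v, h⟩ = c.comp (X.mkE v) (X.mkM h) := factor' hX c v h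
  -- the comparison trick: comp (comp (mkM h) fb) (mkE v) = cnrId c0
  have hθc : c.comp (c.comp (X.mkM h) fb) (X.mkE v) = X.cnrId c0 := by
    obtain ⟨θu, -, hun⟩ := uniq_lemma hX c v h v h rfl
    have e1 := hun (X.cnrId c0) ⟨c.comp_id _, c.id_comp _⟩
    have e2 := hun (c.comp (c.comp (X.mkM h) fb) (X.mkE v))
      ⟨by rw [← c.assoc, ← c.assoc, ← hf, hfb1, c.id_comp],
       by rw [c.assoc, ← hf, c.assoc, hfb2, c.comp_id]⟩
    exact e2.trans e1.symm
  have hP1 : c.comp (X.mkE v) (c.comp (X.mkM h) fb) = X.cnrId a := by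
    rw [← c.assoc, ← hf, hfb1]
  have hQ1 : c.comp (X.mkM h) (c.comp fb (X.mkE v)) = X.cnrId c0 := by
    rw [← c.assoc]; exact hθc
  have hQ2 : c.comp (c.comp fb (X.mkE v)) (X.mkM h) = X.cnrId b := by
    rw [c.assoc, ← hf, hfb2]
  -- VIso v
  obtain ⟨coR, hRrep0⟩ := Quot.exists_rep (c.comp (X.mkM h) fb)
  obtain ⟨zR, vR, hR⟩ := coR
  have hRrep : X.mkCnr ⟨zR, vR, hR⟩ = c.comp (X.mkM h) fb := hRrep0
  have EA : X.mkCnr ⟨zR, X.vComp v vR, hR⟩ = X.cnrId a := by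
    rw [← comp_mkE_corner hX c v vR hR, hRrep]; exact hP1
  obtain ⟨hVvvR, -⟩ := L1 hX c EA
  obtain ⟨pR, wR, boR, ⟨κR⟩⟩ := hX.2.1 hR v
  have hcp := c.compat vR hR v (X.hId c0) wR boR κR ((hX.2.2.1 κR).1)
  rw [X.hComp_id] at hcp
  have EC : X.mkCnr ⟨pR, X.vComp vR wR, boR⟩ = X.cnrId c0 := by
    rw [← hcp, hRrep]; exact hθc
  obtain ⟨hVvRwR, -⟩ := L1 hX c EC
  obtain ⟨tu, htu1, htu2⟩ := hVvvR
  obtain ⟨tR, htR1, htR2⟩ := hVvRwR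
  have hrv : X.vComp (X.vComp vR tu) v = X.vId c0 := by
    have hYvR : X.vComp (X.vComp tu v) vR = X.vId zR := by rw [X.vAssoc]; exact htu2
    have hvRρ : X.vComp vR (X.vComp wR tR) = X.vId c0 := by rw [← X.vAssoc]; exact htR1
    have hYρ : X.vComp tu v = X.vComp wR tR := by
      have h5 : X.vComp (X.vComp tu v) (X.vComp vR (X.vComp wR tR)) = X.vComp wR tR := by
        rw [← X.vAssoc, hYvR, X.vId_comp]
      rw [hvRρ, X.vComp_id] at h5
      exact h5
    rw [X.vAssoc, hYρ]
    exact hvRρ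
  have hVv : X.VIso v := ⟨X.vComp vR tu, by rw [← X.vAssoc]; exact htu1, hrv⟩
  -- HIso h
  obtain ⟨coR', hR'rep0⟩ := Quot.exists_rep (c.comp fb (X.mkE v))
  obtain ⟨z', v', h'⟩ := coR'
  have hR'rep : X.mkCnr ⟨z', v', h'⟩ = c.comp fb (X.mkE v) := hR'rep0
  obtain ⟨pg, wg, bog, ⟨κg⟩⟩ := hX.2.1 h v'
  have hcg := c.compat (X.vId c0) h v' h' wg bog κg ((hX.2.2.1 κg).1)
  rw [X.vId_comp] at hcg
  have Eg1 : X.mkCnr ⟨pg, wg, X.hComp bog h'⟩ = X.cnrId c0 := by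
    rw [← hcg, hR'rep]; exact hQ1
  have hHK := (L1 hX c Eg1).2
  have h3 := comp_corner_mkM hX c v' h' h
  have Eg2 : X.mkCnr ⟨z', v', X.hComp h' h⟩ = X.cnrId b := by
    rw [← h3, hR'rep]; exact hQ2
  have hHJ := (L1 hX c Eg2).2
  obtain ⟨K', hK1, hK2⟩ := hHK
  obtain ⟨J, hJ1, hJ2⟩ := hHJ
  have hlam : X.hComp (X.hComp K' bog) h' = X.hId c0 := by rw [X.hAssoc]; exact hK2
  have hl2 : X.hComp (X.hComp J h') h = X.hId b := by rw [X.hAssoc]; exact hJ2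
  have hl1 : X.hComp h (X.hComp J h') = X.hId c0 := by
    have hstep : X.hComp h' (X.hComp h (X.hComp J h')) = h' := by
      rw [← X.hAssoc, ← X.hAssoc, hJ1, X.hId_comp]
    have h5 : X.hComp (X.hComp K' bog) (X.hComp h' (X.hComp h (X.hComp J h'))) = X.hId c0 := by
      rw [hstep]; exact hlam
    rw [← X.hAssoc, hlam, X.hId_comp] at h5
    exact h5
  have hHh : X.HIso h := ⟨X.hComp J h', hl1, hl2⟩
  constructor
  · obtain ⟨θ2, ⟨S2⟩⟩ := sq_exists_hIso hX h (X.hId b) (X.vId b) hHh (hIso_hId b)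
    exact ⟨X.vComp v θ2, Quot.sound ⟨θ2, S2, rfl⟩⟩
  · obtain ⟨tv, htv1, htv2⟩ := hVv
    obtain ⟨g', ⟨Sg⟩⟩ := sq_exists_vIso hX h tv (X.vId b) ⟨v, htv2, htv1⟩ (vIso_vId b)
    exact ⟨g', Quot.sound ⟨tv, Sg, htv1⟩⟩

end DblCat


open DblCat in
/-- For a factorization double category `X`, the classes
`(E_X, M_X)` form an orthogonal factorization system on the category of corners:
both are wide subcategories, every morphism factors as an `E_X` morphism followed by an
`M_X` morphism, the factorization is unique up to a unique comparison morphism, and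
`E_X ∩ M_X` is exactly the class of isomorphisms of `Cnr X`. -/
theorem statement14 (X : DblCat.{u}) (hX : X.IsFactDbl) (c : CnrCat X) :
    -- wide subcategories
    (∀ a : X.Obj, X.InE (X.cnrId a)) ∧
    (∀ a : X.Obj, X.InM (X.cnrId a)) ∧
    (∀ {a b d : X.Obj} (f : X.CnrHom a b) (g : X.CnrHom b d),
        X.InE f → X.InE g → X.InE (c.comp f g)) ∧
    (∀ {a b d : X.Obj} (f : X.CnrHom a b) (g : X.CnrHom b d),
        X.InM f → X.InM g → X.InM (c.comp f g)) ∧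
    -- existence of factorizations
    (∀ {a b : X.Obj} (f : X.CnrHom a b),
        ∃ (x : X.Obj) (e : X.Ver a x) (m : X.Hor x b),
          f = c.comp (X.mkE e) (X.mkM m)) ∧
    -- uniqueness of factorizations up to a unique comparison morphism
    (∀ {a x y b : X.Obj} (e : X.Ver a x) (m : X.Hor x b) (e' : X.Ver a y) (m' : X.Hor y b),
        c.comp (X.mkE e) (X.mkM m) = c.comp (X.mkE e') (X.mkM m') →
        ∃! θ : X.CnrHom x y,
          c.comp (X.mkE e) θ = X.mkE e' ∧ c.comp θ (X.mkM m') = X.mkM m) ∧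
    -- E_X ∩ M_X = isomorphisms
    (∀ {a b : X.Obj} (f : X.CnrHom a b),
        (X.InE f ∧ X.InM f) ↔ X.CnrIso c.toCnrStruct f) := by
  refine ⟨fun a => ⟨X.vId a, rfl⟩, fun a => ⟨X.hId a, rfl⟩, ?_, ?_, ?_, ?_, ?_⟩
  · rintro a b d f g ⟨u, rfl⟩ ⟨w, rfl⟩
    exact ⟨X.vComp u w, comp_mkE_mkE hX c u w⟩
  · rintro a b d f g ⟨p, rfl⟩ ⟨q, rfl⟩
    exact ⟨X.hComp p q, comp_mkM_mkM hX c p q⟩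
  · intro a b f
    obtain ⟨⟨x, e, m⟩, rfl⟩ := Quot.exists_rep f
    exact ⟨x, e, m, factor' hX c e m⟩
  · intro a x y b e m e' m' H
    exact uniq_lemma hX c e m e' m' H
  · intro a b f
    constructor
    · rintro ⟨⟨u, rfl⟩, hM⟩
      exact EM_to_iso hX c hM
    · intro hiso
      obtain ⟨⟨c0, v, h⟩, rfl⟩ := Quot.exists_rep f
      exact iso_to_EM hX c v h hiso

end Paper
end
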